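/- arXiv:2001.07056 — 7 statements merged into one kernel-verified Lean document; each statement's English description precedes it below -/
import Mathlib

section
/- Consider the activation (bootstrap percolation) process on G with source set S: initially all nodes of S are active; an inactive node becomes active in a round if it has at least 2f+1 active neighbors, or three distinctly colored active neighbors, or a trusted active neighbor. If G is strongly (2f+1,Δ,T)-robust with respect to S and S is nonempty, then the process activates all of V within at most |V| − 1 rounds. -/
open Finset
open scoped Classical

def threeColors {V Γ : Type*} (Δ : V → Γ) (F : Finset V) : Prop :=
  ∃ u ∈ F, ∃ v ∈ F, ∃ w ∈ F, Δ u ≠ Δ v ∧ Δ v ≠ Δ w ∧ Δ u ≠ Δ w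

def reachable {V Γ : Type*} [DecidableEq V] (N : V → Finset V) (Δ : V → Γ)
    (T : Finset V) (r : ℕ) (C : Finset V) : Prop :=
  ∃ i ∈ C, r ≤ ((N i) \ C).card ∨ threeColors Δ ((N i) \ C) ∨ ∃ t ∈ (N i) \ C, t ∈ T

def strongRobust {V Γ : Type*} [Fintype V] [DecidableEq V] (N : V → Finset V) (Δ : V → Γ)
    (T : Finset V) (r : ℕ) (S : Finset V) : Prop :=
  ∀ C : Finset V, C.Nonempty → C ⊆ Sᶜ → reachable N Δ T r C

/-- One round of the activation (bootstrap percolation) process: an inactive node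
activates if it has at least `r` active neighbors, or three distinctly colored active
neighbors, or a trusted active neighbor. -/
noncomputable def step {V Γ : Type*} [Fintype V] [DecidableEq V]
    (N : V → Finset V) (Δ : V → Γ) (T : Finset V) (r : ℕ) (Act : Finset V) : Finset V :=
  Act ∪ Finset.univ.filter (fun i =>
    r ≤ ((N i) ∩ Act).card ∨ threeColors Δ ((N i) ∩ Act) ∨ ∃ t ∈ (N i) ∩ Act, t ∈ T)

/-! Robustness applied to the complement of the active set gives a node that activates in the
next round, so every round before saturation adds a node; starting from `|S| ≥ 1` active
nodes, `|V| - 1` rounds suffice. -/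

theorem Finset.iterate_eq_univ_of_ssubset {α : Type*} [Fintype α] (g : Finset α → Finset α)
    (hle : ∀ A, A ⊆ g A) (S : Finset α) (hlt : ∀ A, S ⊆ A → A ≠ univ → A ⊂ g A) :
    ∀ k, Fintype.card α - #S ≤ k → g^[k] S = univ := by
  intro k
  induction k generalizing S with
  | zero =>
    intro hk
    exact eq_univ_of_card S (le_antisymm (card_le_univ S) (by omega))
  | succ k ih =>
    intro hk
    rw [Function.iterate_succ_apply]
    by_cases hS : S = univ
    · have hfix : g univ = univ := univ_subset_iff.mp (hle univ)
      rw [hS, hfix, Function.iterate_fixed hfix]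
    · have hgrow := hlt S Subset.rfl hS
      refine ih (g S) (fun A hA => hlt A (hgrow.subset.trans hA)) ?_
      have := card_lt_card hgrow
      omega

section Activation

variable {V Γ : Type*} [Fintype V] [DecidableEq V]
  (N : V → Finset V) (Δ : V → Γ) (T : Finset V) (r : ℕ)

theorem subset_step (Act : Finset V) : Act ⊆ step N Δ T r Act :=
  subset_union_left

theorem ssubset_step_of_reachable_compl {Act : Finset V} (h : reachable N Δ T r Actᶜ) :
    Act ⊂ step N Δ T r Act := by
  obtain ⟨i, hi, hcond⟩ := h
  have hdiff : N i \ Actᶜ = N i ∩ Act := by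
    ext x
    simp
  rw [hdiff] at hcond
  have hstep : i ∈ step N Δ T r Act := mem_union_right _ (by simpa using hcond)
  exact (ssubset_iff_of_subset (subset_step N Δ T r Act)).mpr ⟨i, hstep, mem_compl.mp hi⟩

theorem ssubset_step_of_strongRobust {S Act : Finset V} (hrob : strongRobust N Δ T r S)
    (hSA : S ⊆ Act) (hA : Act ≠ univ) : Act ⊂ step N Δ T r Act := by
  refine ssubset_step_of_reachable_compl N Δ T r (hrob Actᶜ ?_ (compl_subset_compl.mpr hSA))
  exact (compl_ne_univ_iff_nonempty Actᶜ).mp (by rwa [compl_compl])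

end Activation

theorem stmt5 {V Γ : Type*} [Fintype V] [DecidableEq V]
    (N : V → Finset V) (Δ : V → Γ) (T : Finset V) (f : ℕ) (S : Finset V)
    (hS : S.Nonempty)
    (hrob : strongRobust N Δ T (2 * f + 1) S) :
    (step N Δ T (2 * f + 1))^[Fintype.card V - 1] S = Finset.univ := by
  refine iterate_eq_univ_of_ssubset _ (subset_step N Δ T _) S
    (fun _ hSA hA => ssubset_step_of_strongRobust N Δ T _ hrob hSA hA) _ ?_
  have := card_pos.mpr hS
  omega
end

section
/- If G is NOT strongly (2f+1,Δ,T)-robust with respect to S, then the activation process (where a node activates upon having 2f+1 active neighbors, or three distinctly colored active neighbors, or a trusted active neighbor, starting from S active) never activates all nodes: there is a nonempty set P ⊆ V \ S none of whose elements is ever activated. -/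
/-
A nonempty set `C ⊆ V \ S` that is not `(2f+1, Δ, T)`-reachable stays inactive forever: as long as
no node of `C` is active, the active neighbours of any `i ∈ C` lie in `N i \ C`, so an activation
of `i` would witness exactly the reachability of `C` that fails.
-/

open Finset
open scoped Classical

theorem threeColors_mono {V Γ : Type*} {Δ : V → Γ} {F G : Finset V} (hFG : F ⊆ G)
    (h : threeColors Δ F) : threeColors Δ G := by
  obtain ⟨u, hu, v, hv, w, hw, hcol⟩ := h
  exact ⟨u, hFG hu, v, hFG hv, w, hFG hw, hcol⟩

theorem disjoint_step_of_not_reachable {V Γ : Type*} [Fintype V] [DecidableEq V]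
    {N : V → Finset V} {Δ : V → Γ} {T : Finset V} {r : ℕ} {C Act : Finset V}
    (hC : ¬ reachable N Δ T r C) (hAct : Disjoint C Act) :
    Disjoint C (step N Δ T r Act) := by
  refine Finset.disjoint_left.2 fun i hiC hi ↦ hC ⟨i, hiC, ?_⟩
  have hsub : N i ∩ Act ⊆ N i \ C := fun x hx ↦ by
    rw [mem_inter] at hx
    exact mem_sdiff.2 ⟨hx.1, Finset.disjoint_right.1 hAct hx.2⟩
  simp only [step, mem_union, mem_filter, mem_univ, true_and] at hi
  rcases hi with hiAct | hcard | hcol | ⟨t, ht, htT⟩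
  · exact absurd hiAct (Finset.disjoint_left.1 hAct hiC)
  · exact Or.inl (hcard.trans (card_le_card hsub))
  · exact Or.inr (Or.inl (threeColors_mono hsub hcol))
  · exact Or.inr (Or.inr ⟨t, hsub ht, htT⟩)

theorem disjoint_iterate_step_of_not_reachable {V Γ : Type*} [Fintype V] [DecidableEq V]
    {N : V → Finset V} {Δ : V → Γ} {T : Finset V} {r : ℕ} {C S : Finset V}
    (hC : ¬ reachable N Δ T r C) (hS : Disjoint C S) (k : ℕ) :
    Disjoint C ((step N Δ T r)^[k] S) := by
  induction k with
  | zero => exact hS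
  | succ k ih =>
    rw [Function.iterate_succ_apply']
    exact disjoint_step_of_not_reachable hC ih

theorem stmt6 {V Γ : Type*} [Fintype V] [DecidableEq V]
    (N : V → Finset V) (Δ : V → Γ) (T : Finset V) (f : ℕ) (S : Finset V)
    (hnrob : ¬ strongRobust N Δ T (2 * f + 1) S) :
    ∃ P : Finset V, P.Nonempty ∧ P ⊆ Sᶜ ∧
      ∀ k : ℕ, ∀ i ∈ P, i ∉ (step N Δ T (2 * f + 1))^[k] S := by
  simp only [strongRobust, not_forall] at hnrob
  obtain ⟨C, hne, hsub, hC⟩ := hnrob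
  have hS : Disjoint C S := subset_compl_iff_disjoint_right.1 hsub
  exact ⟨C, hne, hsub, fun k _ hi ↦
    Finset.disjoint_left.1 (disjoint_iterate_step_of_not_reachable hC hS k) hi⟩
end

section
/- Suppose a set A ⊆ V is f-local (|N(i) ∩ A| ≤ f for all i ∉ A), mono-chromatic (all nodes in A have the same color under Δ), and disjoint from T. Suppose a nonempty set C ⊆ V satisfies C ⊆ A, and the complement R = V \ A is nonempty with R ⊆ V \ S. If all neighbors of every node of R outside R lie in A, then R is not (2f+1,Δ,T)-reachable. -/
open Finset

theorem stmt8 {V Γ : Type*} [Fintype V] [DecidableEq V]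
    (N : V → Finset V) (Δ : V → Γ) (T : Finset V) (f : ℕ) (A S : Finset V)
    -- `A` is `f`-local
    (hfl : ∀ i ∉ A, ((N i) ∩ A).card ≤ f)
    -- `A` is mono-chromatic
    (hmono : ∀ a ∈ A, ∀ b ∈ A, Δ a = Δ b)
    -- `A` is disjoint from the trusted set
    (hAT : Disjoint A T)
    (hA : A.Nonempty)
    (hR : (Aᶜ : Finset V).Nonempty)
    (hRS : (Aᶜ : Finset V) ⊆ Sᶜ)
    -- all neighbors of nodes of `R` lying outside `R` lie in `A`
    (hnbr : ∀ i ∈ (Aᶜ : Finset V), (N i) \ Aᶜ ⊆ A) :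
    ¬ reachable N Δ T (2 * f + 1) (Aᶜ : Finset V) := by
  rintro ⟨i, hi, hcase⟩
  have hiA : i ∉ A := by simpa using hi
  have hsub : (N i) \ Aᶜ ⊆ A := hnbr i hi
  rcases hcase with hcard | ⟨u, hu, v, hv, w, hw, huv, hvw, huw⟩ | ⟨t, ht, htT⟩
  · have h1 : (N i) \ Aᶜ ⊆ (N i) ∩ A := fun x hx =>
      Finset.mem_inter.mpr ⟨(Finset.mem_sdiff.mp hx).1, hsub hx⟩
    have := le_trans hcard (le_trans (Finset.card_le_card h1) (hfl i hiA))
    omega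
  · exact huv (hmono u (hsub hu) v (hsub hv))
  · exact (Finset.disjoint_left.mp hAT (hsub ht)) htT
end

section
/- Sorted-trimming by color preserves the convex hull of regular values: Let values x_1 ≥ x_2 ≥ … ≥ x_n be assigned to nodes n_1,…,n_n with colors Δ(n_p), and suppose there are at least three distinct colors among {n_1,…,n_n} and at most one color is 'adversarial' (any subset of nodes sharing one fixed color may hold arbitrary values, all other nodes are 'regular'). Define m = min{p : Δ(n_p) ≠ Δ(n_1)} and M = max{p : Δ(n_p) ≠ Δ(n_n)}. Then m ≤ M, and every value x_p with m ≤ p ≤ M satisfies min over regular nodes of their values ≤ x_p ≤ max over regular nodes of their values. -/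
theorem not_three_distinct_of_forall_eq_or_eq {ι α : Type*} {f : ι → α} {a b : α}
    (hf : ∀ q, f q = a ∨ f q = b) : ¬ ∃ u v w, f u ≠ f v ∧ f v ≠ f w ∧ f u ≠ f w := by
  rintro ⟨u, v, w, huv, hvw, huw⟩
  rcases hf u with hu | hu <;> rcases hf v with hv | hv <;> rcases hf w with hw | hw <;>
    simp_all

theorem le_of_three_distinct_of_eq_below_of_eq_above {ι α : Type*} [LinearOrder ι]
    {f : ι → α} {a b : α} {m M : ι} (hm : ∀ p < m, f p = a) (hM : ∀ p, M < p → f p = b)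
    (h3 : ∃ u v w, f u ≠ f v ∧ f v ≠ f w ∧ f u ≠ f w) : m ≤ M := by
  by_contra! hMm
  exact not_three_distinct_of_forall_eq_or_eq
    (fun q => (lt_or_ge q m).imp (hm q) fun hqm => hM q (hMm.trans_le hqm)) h3

section Regular

variable {ι α β : Type*} [Preorder ι] [Preorder β] {x : ι → β} (hx : Antitone x)
  (f : ι → α) (c : α)
include hx

theorem exists_ne_le_of_ne {i m p : ι} (him : i ≤ m) (hf : f m ≠ f i) (hmp : m ≤ p) :
    ∃ a, f a ≠ c ∧ a ≤ m ∧ x p ≤ x a := by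
  by_cases hi : f i = c
  · exact ⟨m, hi ▸ hf, le_rfl, hx hmp⟩
  · exact ⟨i, hi, him, hx (him.trans hmp)⟩

theorem exists_ne_ge_of_ne {i M p : ι} (hMi : M ≤ i) (hf : f M ≠ f i) (hpM : p ≤ M) :
    ∃ b, f b ≠ c ∧ M ≤ b ∧ x b ≤ x p :=
  exists_ne_le_of_ne (ι := ιᵒᵈ) (β := βᵒᵈ) hx.dual f c hMi hf hpM

end Regular

theorem stmt12 {Γ : Type*}
    (n : ℕ) (hn : 3 ≤ n)
    (x : Fin n → ℝ) (hx : Antitone x)   -- values sorted in descending order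
    (Δc : Fin n → Γ) (cstar : Γ)        -- coloring; `cstar` is the adversarial color
    -- at least three distinct colors are present
    (hdiv : ∃ u v w : Fin n, Δc u ≠ Δc v ∧ Δc v ≠ Δc w ∧ Δc u ≠ Δc w)
    -- `m` is the smallest index whose color differs from that of the top node
    (m : Fin n)
    (hm₁ : Δc m ≠ Δc ⟨0, by omega⟩)
    (hm₂ : ∀ p : Fin n, p < m → Δc p = Δc ⟨0, by omega⟩)
    -- `M` is the largest index whose color differs from that of the bottom node
    (M : Fin n)
    (hM₁ : Δc M ≠ Δc ⟨n - 1, by omega⟩)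
    (hM₂ : ∀ p : Fin n, M < p → Δc p = Δc ⟨n - 1, by omega⟩) :
    m ≤ M ∧
    ∀ p : Fin n, m ≤ p → p ≤ M →
      (∃ a : Fin n, Δc a ≠ cstar ∧ a ≤ m ∧ x p ≤ x a) ∧
      (∃ b : Fin n, Δc b ≠ cstar ∧ M ≤ b ∧ x b ≤ x p) :=
  ⟨le_of_three_distinct_of_eq_below_of_eq_above hm₂ hM₂ hdiv, fun _ hmp hpM =>
    ⟨exists_ne_le_of_ne hx Δc cstar (Nat.zero_le _) hm₁ hmp,
      exists_ne_ge_of_ne hx Δc cstar (Nat.le_sub_one_of_lt M.isLt) hM₁ hpM⟩⟩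
end

section
/- In the TSRA reduction: Given a set-cover instance (U, F) with bipartite graph G having node set Ū ∪ F̄, edges from f_j to u_i whenever i ∈ F_j, all nodes the same color, source set S = F̄, and r = |F|: if there exist t subsets F_{j_1},…,F_{j_t} whose union is U, then taking T = {f_{j_1},…,f_{j_t}} makes G strongly (r,Δ,T)-robust with respect to S. -/
open Finset

/-- The bipartite graph of the set-cover reduction: edge from `f_j` to `u_i` iff `i ∈ F j`. -/
def scNbhd (p m : ℕ) (F : Fin m → Finset (Fin p)) :
    (Fin p ⊕ Fin m) → Finset (Fin p ⊕ Fin m) :=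
  Sum.elim
    (fun i => (Finset.univ.filter fun j => i ∈ F j).image Sum.inr)
    (fun _ => ∅)

/-- The source set `F̄` of the set-cover reduction. -/
def scSource (p m : ℕ) : Finset (Fin p ⊕ Fin m) :=
  Finset.univ.image Sum.inr

/-! Every node outside the source set is an element node `u_i`; the cover gives it a neighbour
`f_j` with `j ∈ J`, which is trusted, and since it is a source it lies outside every admissible `C`. -/

theorem strongRobust_of_forall_exists_trusted_source_neighbor {V Γ : Type*} [Fintype V]
    [DecidableEq V] {N : V → Finset V} (Δ : V → Γ) {T S : Finset V} (r : ℕ)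
    (h : ∀ v ∉ S, ∃ s ∈ N v, s ∈ S ∧ s ∈ T) : strongRobust N Δ T r S := by
  rintro C ⟨v, hvC⟩ hCS
  obtain ⟨s, hsN, hsS, hsT⟩ := h v (Finset.mem_compl.mp (hCS hvC))
  have hsC : s ∉ C := fun hsC => Finset.mem_compl.mp (hCS hsC) hsS
  exact ⟨v, hvC, Or.inr (Or.inr ⟨s, Finset.mem_sdiff.mpr ⟨hsN, hsC⟩, hsT⟩)⟩

theorem inr_mem_scSource (p m : ℕ) (j : Fin m) : Sum.inr j ∈ scSource p m := by
  simp [scSource]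

theorem exists_eq_inl_of_notMem_scSource {p m : ℕ} {v : Fin p ⊕ Fin m}
    (hv : v ∉ scSource p m) : ∃ i, v = Sum.inl i := by
  cases v with
  | inl i => exact ⟨i, rfl⟩
  | inr j => exact absurd (inr_mem_scSource p m j) hv

theorem inr_mem_scNbhd_inl {p m : ℕ} {F : Fin m → Finset (Fin p)} {i : Fin p} {j : Fin m} :
    Sum.inr j ∈ scNbhd p m F (Sum.inl i) ↔ i ∈ F j := by
  simp [scNbhd]

theorem stmt14_general (p m : ℕ) (F : Fin m → Finset (Fin p))
    (J : Finset (Fin m))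
    -- the `t` chosen subsets cover `U`
    (hcover : ∀ i : Fin p, ∃ j ∈ J, i ∈ F j) :
    strongRobust (scNbhd p m F) (fun _ : Fin p ⊕ Fin m => ())
      (J.image Sum.inr) m (scSource p m) := by
  refine strongRobust_of_forall_exists_trusted_source_neighbor _ _ fun v hv => ?_
  obtain ⟨i, rfl⟩ := exists_eq_inl_of_notMem_scSource hv
  obtain ⟨j, hjJ, hij⟩ := hcover i
  exact ⟨Sum.inr j, inr_mem_scNbhd_inl.mpr hij, inr_mem_scSource p m j,
    Finset.mem_image_of_mem _ hjJ⟩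

theorem stmt14 (p m t : ℕ) (F : Fin m → Finset (Fin p))
    (J : Finset (Fin m)) (hJ : J.card = t)
    -- the `t` chosen subsets cover `U`
    (hcover : ∀ i : Fin p, ∃ j ∈ J, i ∈ F j) :
    strongRobust (scNbhd p m F) (fun _ : Fin p ⊕ Fin m => ())
      (J.image Sum.inr) m (scSource p m) :=
  stmt14_general p m F J hcover
end

section
/- In the 3-CSRA reduction: if the family F can be partitioned into three disjoint collections P_1, P_2, P_3 each of which covers U, then assigning color i to the nodes of F̄ corresponding to P_i (i = 1,2,3) and arbitrary colors to Ū makes the bipartite graph G strongly (r,Δ,∅)-robust with respect to S = F̄, where r = |F|. -/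
open Finset

/-
Every node of `C` lies in `Ū`, so pick one, `u`. For each colour `c`, some set `F_j` of colour `c`
contains `u`, and `f_j ∉ C`; hence the neighbours of `u` outside `C` carry all three colours.
-/

theorem threeColors_of_forall_exists {V : Type*} {Δ : V → Fin 3} {S : Finset V}
    (h : ∀ c : Fin 3, ∃ x ∈ S, Δ x = c) : threeColors Δ S := by
  obtain ⟨x, hx, hx0⟩ := h 0
  obtain ⟨y, hy, hy1⟩ := h 1
  obtain ⟨z, hz, hz2⟩ := h 2
  exact ⟨x, hx, y, hy, z, hz, by simp [*]⟩

theorem mem_compl_scSource_iff {p m : ℕ} {x : Fin p ⊕ Fin m} :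
    x ∈ (scSource p m)ᶜ ↔ x.isLeft := by
  cases x <;> simp [scSource]

theorem inr_mem_scNbhd_inl_iff {p m : ℕ} {F : Fin m → Finset (Fin p)} {u : Fin p} {j : Fin m} :
    Sum.inr j ∈ scNbhd p m F (Sum.inl u) ↔ u ∈ F j := by
  simp [scNbhd]

theorem threeColors_scNbhd_inl_sdiff {p m : ℕ} {F : Fin m → Finset (Fin p)} {P : Fin m → Fin 3}
    (hcover : ∀ c : Fin 3, ∀ i : Fin p, ∃ j : Fin m, P j = c ∧ i ∈ F j) (δU : Fin p → Fin 3)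
    {C : Finset (Fin p ⊕ Fin m)} (hC : C ⊆ (scSource p m)ᶜ) (u : Fin p) :
    threeColors (Sum.elim δU P) (scNbhd p m F (Sum.inl u) \ C) := by
  refine threeColors_of_forall_exists fun c => ?_
  obtain ⟨j, hjc, huj⟩ := hcover c u
  have hjC : Sum.inr j ∉ C := fun hj => by simpa using mem_compl_scSource_iff.mp (hC hj)
  exact ⟨Sum.inr j, mem_sdiff.mpr ⟨inr_mem_scNbhd_inl_iff.mpr huj, hjC⟩, hjc⟩

theorem stmt16 (p m : ℕ) (F : Fin m → Finset (Fin p))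
    -- `P` partitions `F` into three collections, each covering `U`
    (P : Fin m → Fin 3)
    (hcover : ∀ c : Fin 3, ∀ i : Fin p, ∃ j : Fin m, P j = c ∧ i ∈ F j)
    -- arbitrary colors on the `Ū` side
    (δU : Fin p → Fin 3) :
    strongRobust (scNbhd p m F) (Sum.elim δU P)
      (∅ : Finset (Fin p ⊕ Fin m)) m (scSource p m) := by
  intro C ⟨x, hx⟩ hC
  obtain ⟨u, rfl⟩ : ∃ u, x = Sum.inl u :=
    Sum.isLeft_iff.mp (mem_compl_scSource_iff.mp (hC hx))
  exact ⟨Sum.inl u, hx, Or.inr (Or.inl (threeColors_scNbhd_inl_sdiff hcover δU hC u))⟩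
end

section
/- Converse of the 3-CSRA reduction: in the bipartite set-cover graph with r = |F| ≥ 3 and empty trusted set, if F cannot be partitioned into three disjoint covers of U and no single F_j equals U for all j (i.e., |F| ≥ 3 with not all subsets equal to U), then for every coloring Δ : V → {1,2,3}, G is not strongly (r,Δ,∅)-robust with respect to S = F̄. -/
open Finset

/-!
Test robustness on the singletons `{u_i}`. Since `u_i` has only `F̄`-neighbours and there are
no trusted nodes, each `u_i` lies in every `F_j` or sees all three colours on its neighbours.
Colour `F̄` by `Δ` itself; the colour class that fails to cover `U` misses some `u_i`, whose
neighbours then avoid that colour, so `u_i` lies in every `F_j` and the colour is absent from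
`F̄`. But then no `u_i` sees three colours, all `F_j` equal `U`, and any split of the `m ≥ 3`
sets into three nonempty classes is a partition into three covers.
-/

lemma threeColors.exists_eq {V : Type*} {Δ : V → Fin 3} {s : Finset V}
    (h : threeColors Δ s) (c : Fin 3) : ∃ x ∈ s, Δ x = c := by
  obtain ⟨u, hu, v, hv, w, hw, huv, hvw, huw⟩ := h
  have : Δ u = c ∨ Δ v = c ∨ Δ w = c := by omega
  rcases this with h | h | h
  exacts [⟨u, hu, h⟩, ⟨v, hv, h⟩, ⟨w, hw, h⟩]

section SetCover

variable {p m : ℕ} {F : Fin m → Finset (Fin p)}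

lemma scNbhd_inl_sdiff (i : Fin p) :
    scNbhd p m F (.inl i) \ {.inl i} = (univ.filter (i ∈ F ·)).image Sum.inr := by
  rw [sdiff_singleton_eq_erase, erase_eq_of_notMem (by simp [scNbhd])]
  rfl

lemma inl_mem_compl_scSource (i : Fin p) : (Sum.inl i : Fin p ⊕ Fin m) ∈ (scSource p m)ᶜ := by
  simp [scSource]

lemma mem_all_or_threeColors_of_strongRobust {Γ : Type*} {Δ : Fin p ⊕ Fin m → Γ}
    (h : strongRobust (scNbhd p m F) Δ ∅ m (scSource p m)) (i : Fin p) :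
    (∀ j, i ∈ F j) ∨ threeColors Δ ((univ.filter (i ∈ F ·)).image Sum.inr) := by
  obtain ⟨x, hx, hreach⟩ := h {.inl i} (singleton_nonempty _)
    (singleton_subset_iff.mpr (inl_mem_compl_scSource i))
  rw [mem_singleton] at hx
  subst hx
  rw [scNbhd_inl_sdiff] at hreach
  rcases hreach with hcard | hthree | ⟨_, _, hT⟩
  · left
    rw [card_image_of_injective _ Sum.inr_injective] at hcard
    have hfull := eq_univ_of_card _ (le_antisymm (card_le_univ _) (by rwa [Fintype.card_fin]))
    exact fun j => filter_eq_self.mp hfull j (mem_univ j)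
  · exact .inr hthree
  · exact absurd hT (notMem_empty _)

end SetCover

theorem stmt17 (p m : ℕ) (F : Fin m → Finset (Fin p)) (hm : 3 ≤ m)
    -- `F` cannot be partitioned into three disjoint covers of `U`
    (hnocover : ∀ P : Fin m → Fin 3, ∃ c : Fin 3, ∃ i : Fin p,
      ∀ j : Fin m, P j = c → i ∉ F j) :
    ∀ Δ : (Fin p ⊕ Fin m) → Fin 3,
      ¬ strongRobust (scNbhd p m F) Δ (∅ : Finset (Fin p ⊕ Fin m)) m (scSource p m) := by
  intro Δ hrob
  have hcov : ∀ i, (∀ j, i ∈ F j) ∨ ∀ c, ∃ j, i ∈ F j ∧ Δ (.inr j) = c := fun i =>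
    (mem_all_or_threeColors_of_strongRobust hrob i).imp_right fun h c => by
      simpa using h.exists_eq c
  obtain ⟨c, i, hmiss⟩ := hnocover (Δ ∘ Sum.inr)
  have hc : ∀ j, Δ (.inr j) ≠ c := by
    rcases hcov i with hall | hrainbow
    · exact fun j hj => hmiss j hj (hall j)
    · obtain ⟨j, hij, hj⟩ := hrainbow c
      exact absurd hij (hmiss j hj)
  have hall : ∀ i j, i ∈ F j := fun i =>
    (hcov i).resolve_right fun hrainbow =>
      let ⟨j, _, hj⟩ := hrainbow c
      hc j hj
  have hP : Function.Surjective (Function.invFun (Fin.castLE hm)) :=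
    Function.invFun_surjective (Fin.castLE_injective hm)
  obtain ⟨c', i', hmiss'⟩ := hnocover (Function.invFun (Fin.castLE hm))
  obtain ⟨j, hj⟩ := hP c'
  exact hmiss' j hj (hall i' j)
end
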